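/- arXiv:1410.1249 — 3 statements merged into one kernel-verified Lean document; each statement's English description precedes it below -/
import Mathlib

section
/- Let B and C be the formal power series over ℚ with B = ∑_{n≥0} binom(2n,n) z^n and C = ∑_{n≥0} C_n z^n where C_n is the n-th Catalan number. Then the formal derivative of C satisfies C′ = B·C². -/
open PowerSeries Finset

/-- The central binomial generating function `B = ∑ binom(2n,n) zⁿ` over `ℚ`. -/
noncomputable def Bgf : PowerSeries ℚ := PowerSeries.mk fun n => ((2 * n).choose n : ℚ)

/-- The Catalan generating function `C = ∑ Cₙ zⁿ` over `ℚ`. -/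
noncomputable def Cgf : PowerSeries ℚ := PowerSeries.mk fun n => (catalan n : ℚ)

lemma choose_eq_catalan (i : ℕ) : ((2 * i).choose i : ℚ) = ((i : ℚ) + 1) * catalan i := by
  have h := succ_mul_catalan_eq_centralBinom i
  rw [Nat.centralBinom] at h
  push_cast [← h]
  ring

lemma Cgf_eq : Cgf = 1 + X * Cgf ^ 2 := by
  ext n
  cases n with
  | zero => simp [Cgf]
  | succ n =>
    rw [map_add, coeff_one, if_neg n.succ_ne_zero, coeff_succ_X_mul, sq, coeff_mul, zero_add]
    simp only [Cgf, coeff_mk, catalan_succ']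
    push_cast
    rfl

lemma Bgf_eq : Bgf = 1 + X * (2 * Bgf * Cgf) := by
  ext n
  cases n with
  | zero => simp [Bgf]
  | succ n =>
    rw [map_add, coeff_one, if_neg n.succ_ne_zero, coeff_succ_X_mul, zero_add,
      show (2 : ℚ⟦X⟧) * Bgf * Cgf = Bgf * Cgf + Bgf * Cgf by ring, map_add, coeff_mul]
    simp only [Bgf, Cgf, coeff_mk]
    simp_rw [choose_eq_catalan]
    have hswap : ∑ p ∈ antidiagonal n, ((p.1 : ℚ) + 1) * catalan p.1 * catalan p.2
        = ∑ p ∈ antidiagonal n, ((p.2 : ℚ) + 1) * catalan p.2 * catalan p.1 :=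
      (Finset.Nat.sum_antidiagonal_swap
        (f := fun p => ((p.1 : ℚ) + 1) * catalan p.1 * catalan p.2)).symm
    nth_rewrite 2 [hswap]
    rw [← Finset.sum_add_distrib]
    have : ((↑(n + 1) : ℚ) + 1) * catalan (n + 1) = ((n : ℚ) + 2) * catalan (n + 1) := by
      push_cast; ring
    rw [this, catalan_succ']
    push_cast
    rw [Finset.mul_sum]
    refine Finset.sum_congr rfl fun p hp => ?_
    have h := Finset.HasAntidiagonal.mem_antidiagonal.mp hp
    have h' : (p.1 : ℚ) + p.2 = n := by exact_mod_cast congrArg Nat.cast h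
    linear_combination (-(catalan p.1 : ℚ) * catalan p.2) * h'

/-- The formal derivative of the Catalan generating function satisfies `C′ = B·C²`. -/
theorem stmt1 : d⁄dX ℚ Cgf = Bgf * Cgf ^ 2 := by
  have hD : d⁄dX ℚ Cgf = Cgf ^ 2 + X * (2 * Cgf * d⁄dX ℚ Cgf) := by
    conv_lhs => rw [Cgf_eq]
    rw [map_add, Derivation.leibniz, Derivation.leibniz_pow]
    simp [smul_eq_mul]
    ring
  linear_combination Bgf * hD - (d⁄dX ℚ Cgf) * Bgf_eq
end

section
/- Let B and C be the central binomial and Catalan generating functions over ℚ, let T₀ = C·(C ∘ (zC²)), and define V_N = B·C⁻¹·T₀·(1 − z·((1 − z(C+T₀))⁻¹)²)⁻¹ (all inverses exist since the relevant power series have nonzero constant term). Then V_N satisfies the algebraic identity V_N²·(4 − 25z)·(1 − 4z) = 2 − 5z + 2·B⁻¹; that is, V_N = √((2 − 5z + 2√(1−4z))/((4−25z)(1−4z))) since B⁻¹ = √(1−4z). -/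
open PowerSeries Finset

/-- Composition `F ∘ a` of formal power series (intended for `a` with zero constant
term, in which case only the terms with `k ≤ n` contribute to the coefficient of `zⁿ`
in `∑ₖ ([zᵏ]F)·aᵏ`, so the finite sum below is the full composition). -/
noncomputable def PScomp (F a : PowerSeries ℚ) : PowerSeries ℚ :=
  PowerSeries.mk fun n => ∑ k ∈ Finset.range (n + 1),
    PowerSeries.coeff k F * PowerSeries.coeff n (a ^ k)

/-- `T₀ = C·(C ∘ (zC²))`, the generating function for ENT trees with mutator at the root. -/
noncomputable def T₀ : PowerSeries ℚ := Cgf * PScomp Cgf (PowerSeries.X * Cgf ^ 2)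

/-- `V_N = (B/C)·T₀·(1 − z/(1 − z(C+T₀))²)⁻¹`, the generating function for new type
vertices of embedded new type trees. -/
noncomputable def VN : PowerSeries ℚ :=
  Bgf * Cgf⁻¹ * T₀ *
    (1 - PowerSeries.X * ((1 - PowerSeries.X * (Cgf + T₀))⁻¹) ^ 2)⁻¹

/-! `zC² = C − 1`, so `D = C ∘ (zC²)` satisfies `(C − 1)D² = D − 1`. These two relations
collapse the definition of `V_N`: `1 − z(C + T₀)` is the inverse of `T₀ = CD`, hence
`1 − z(1 − z(C + T₀))⁻² = 1 − zC²D² = 2 − D` and `V_N = BD/(2 − D)`. Since `B = (zC)'` and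
`zC = z + (zC)²`, differentiation gives `B⁻¹ = 1 − 2zC`, so `B²(1 − 4z) = 1`. The claim is then
the identity `D²(4 − 25z) = (4 − 5z − 4zC)(2 − D)²`, which lies in the ideal generated by the
two relations. -/

lemma coeff_pow_eq_zero_of_lt {R : Type*} [Semiring R] {a : R⟦X⟧} (ha : constantCoeff a = 0)
    {n k : ℕ} (h : n < k) : coeff n (a ^ k) = 0 :=
  coeff_of_lt_order n <| (Nat.cast_lt.mpr h).trans_le (le_order_pow_of_constantCoeff_eq_zero k ha)

lemma PScomp_eq_subst (F : ℚ⟦X⟧) {a : ℚ⟦X⟧} (ha : constantCoeff a = 0) :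
    PScomp F a = F.subst a := by
  ext n
  rw [coeff_subst' (HasSubst.of_constantCoeff_zero' ha), PScomp, coeff_mk,
    finsum_eq_sum_of_support_subset (s := range (n + 1))]
  · simp only [smul_eq_mul]
  · intro k hk
    simp only [Function.mem_support, coe_range, Set.mem_Iio] at hk ⊢
    by_contra! hnk
    exact hk (by rw [coeff_pow_eq_zero_of_lt ha (by omega), smul_zero])

lemma Cgf_eq_map_catalanSeries : Cgf = map (Nat.castRingHom ℚ) catalanSeries := by
  ext n
  simp [Cgf]

lemma X_mul_Cgf_sq : X * Cgf ^ 2 = Cgf - 1 := by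
  have := congrArg (map (Nat.castRingHom ℚ)) catalanSeries_sq_mul_X_add_one
  rw [map_add, map_mul, map_pow, map_X, map_one, ← Cgf_eq_map_catalanSeries] at this
  linear_combination this

lemma constantCoeff_Cgf : constantCoeff Cgf = 1 := by
  simp [Cgf]

lemma Bgf_eq_derivative_X_mul_Cgf : Bgf = d⁄dX ℚ (X * Cgf) := by
  ext n
  rw [coeff_derivative, mul_comm X, coeff_succ_mul_X]
  simp only [Bgf, Cgf, coeff_mk]
  rw [← Nat.centralBinom_eq_two_mul_choose, ← succ_mul_catalan_eq_centralBinom]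
  push_cast
  ring

lemma derivative_mul_one_sub_two_mul {R : Type*} [CommRing R] {E : R⟦X⟧} (h : E = X + E ^ 2) :
    d⁄dX R E * (1 - 2 * E) = 1 := by
  have := congrArg (d⁄dX R) h
  rw [map_add, derivative_X, Derivation.leibniz_pow] at this
  simp only [smul_eq_mul] at this
  linear_combination this

lemma Bgf_mul_one_sub_two_mul_X_mul_Cgf : Bgf * (1 - 2 * X * Cgf) = 1 := by
  rw [Bgf_eq_derivative_X_mul_Cgf, mul_assoc]
  exact derivative_mul_one_sub_two_mul (by linear_combination -X * X_mul_Cgf_sq)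

lemma Bgf_inv : Bgf⁻¹ = 1 - 2 * X * Cgf :=
  (inv_eq_iff_mul_eq_one (by simp [Bgf])).mpr (by rw [mul_comm, Bgf_mul_one_sub_two_mul_X_mul_Cgf])

lemma Bgf_sq_mul_one_sub_four_mul_X : Bgf ^ 2 * (1 - 4 * X) = 1 := by
  linear_combination (Bgf * (1 - 2 * X * Cgf) + 1) * Bgf_mul_one_sub_two_mul_X_mul_Cgf -
    4 * Bgf ^ 2 * X * X_mul_Cgf_sq

noncomputable def Dgf : ℚ⟦X⟧ := PScomp Cgf (X * Cgf ^ 2)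

lemma Cgf_sub_one_mul_Dgf_sq : (Cgf - 1) * Dgf ^ 2 = Dgf - 1 := by
  have ha : constantCoeff (X * Cgf ^ 2 : ℚ⟦X⟧) = 0 := by simp
  have := congrArg (substAlgHom (HasSubst.of_constantCoeff_zero' ha)) X_mul_Cgf_sq
  simp only [map_mul, map_pow, map_sub, map_one, coe_substAlgHom, substAlgHom_X] at this
  rw [Dgf, PScomp_eq_subst _ ha, ← X_mul_Cgf_sq]
  exact this

lemma constantCoeff_Dgf : constantCoeff Dgf = 1 := by
  simp [Dgf, PScomp, Cgf]

lemma Dgf_sq_mul_four_sub_25_mul_X :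
    Dgf ^ 2 * (4 - 25 * X) = (4 - 5 * X - 4 * X * Cgf) * (2 - Dgf) ^ 2 := by
  linear_combination (-16 * Dgf ^ 2) * X_mul_Cgf_sq +
    (-16 + 20 * X + 16 * X * Cgf) * Cgf_sub_one_mul_Dgf_sq

lemma inv_one_sub_X_mul_Cgf_add_T₀ : (1 - X * (Cgf + T₀))⁻¹ = Cgf * Dgf :=
  (inv_eq_iff_mul_eq_one (by simp)).mpr <| by
    rw [T₀, ← Dgf]
    linear_combination (-Dgf - Dgf ^ 2) * X_mul_Cgf_sq - Cgf_sub_one_mul_Dgf_sq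

lemma VN_eq_Bgf_mul_Dgf_mul_inv : VN = Bgf * Dgf * (2 - Dgf)⁻¹ := by
  have hW : 1 - X * ((1 - X * (Cgf + T₀))⁻¹) ^ 2 = 2 - Dgf := by
    rw [inv_one_sub_X_mul_Cgf_add_T₀]
    linear_combination (-Dgf ^ 2) * X_mul_Cgf_sq - Cgf_sub_one_mul_Dgf_sq
  have hC : Cgf⁻¹ * Cgf = 1 := PowerSeries.inv_mul_cancel _ (by simp [constantCoeff_Cgf])
  rw [VN, hW, T₀, ← Dgf]
  linear_combination (Bgf * Dgf * (2 - Dgf)⁻¹) * hC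

/-- `V_N² (4 − 25z)(1 − 4z) = 2 − 5z + 2·B⁻¹`, i.e.
`V_N = √((2 − 5z + 2√(1−4z))/((4−25z)(1−4z)))` since `B⁻¹ = √(1−4z)`. -/
theorem stmt10 :
    VN ^ 2 * (4 - 25 * PowerSeries.X) * (1 - 4 * PowerSeries.X) =
      2 - 5 * PowerSeries.X + 2 * Bgf⁻¹ := by
  have hinv : (2 - Dgf) * (2 - Dgf)⁻¹ = 1 :=
    PowerSeries.mul_inv_cancel _ (by rw [map_sub, constantCoeff_Dgf, map_ofNat]; norm_num)
  rw [VN_eq_Bgf_mul_Dgf_mul_inv, Bgf_inv]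
  calc (Bgf * Dgf * (2 - Dgf)⁻¹) ^ 2 * (4 - 25 * X) * (1 - 4 * X)
      = Bgf ^ 2 * (1 - 4 * X) * (Dgf ^ 2 * (4 - 25 * X)) * ((2 - Dgf)⁻¹) ^ 2 := by ring
    _ = (4 - 5 * X - 4 * X * Cgf) * ((2 - Dgf) * (2 - Dgf)⁻¹) ^ 2 := by
      rw [Bgf_sq_mul_one_sub_four_mul_X, Dgf_sq_mul_four_sub_25_mul_X]
      ring
    _ = 2 - 5 * X + 2 * (1 - 2 * X * Cgf) := by
      rw [hinv]
      ring
end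

section
/- Let B and C be the central binomial and Catalan generating functions over ℚ (C is invertible since its constant term is 1). For every n ≥ 1, the coefficient of z^n in B·C − B·C⁻¹ equals ((3n+1)/(2n+2))·binom(2n,n); that is, the number of new type vertices over all right path* trees with n edges is ((3n+1)/(2n+2))·binom(2n,n). -/
open PowerSeries Finset

/-!
From `binom(2n,n) = (n+1) Cₙ` and the recurrence `(n+2) Cₙ₊₁ = 2(2n+1) Cₙ`, symmetrising
`∑_{i+j=n} Cᵢ (j+1) Cⱼ` gives `∑_{i+j=n} Cᵢ binom(2j,j) = (2n+1) Cₙ`, i.e. `C B + C = 2B`.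
Hence `BC = 2B − C` and `2B/C = B + 1`, so `2(BC − B/C) = 3B − 1 − 2C`, whose `n`-th coefficient
for `n ≥ 1` is `3 binom(2n,n) − 2Cₙ = (3n+1) Cₙ`.
-/

theorem succ_succ_mul_catalan_succ (n : ℕ) :
    (n + 2) * catalan (n + 1) = 2 * (2 * n + 1) * catalan n := by
  refine Nat.eq_of_mul_eq_mul_left n.succ_pos ?_
  calc (n + 1) * ((n + 2) * catalan (n + 1))
      = (n + 1) * Nat.centralBinom (n + 1) := by rw [← succ_mul_catalan_eq_centralBinom]
    _ = 2 * (2 * n + 1) * Nat.centralBinom n := Nat.succ_mul_centralBinom_succ n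
    _ = (n + 1) * (2 * (2 * n + 1) * catalan n) := by
        rw [← succ_mul_catalan_eq_centralBinom]; ring

theorem sum_antidiagonal_catalan_mul_centralBinom (n : ℕ) :
    ∑ p ∈ antidiagonal n, catalan p.1 * Nat.centralBinom p.2 = (2 * n + 1) * catalan n := by
  set S := ∑ p ∈ antidiagonal n, catalan p.1 * Nat.centralBinom p.2
  have hS : S = ∑ p ∈ antidiagonal n, (p.2 + 1) * (catalan p.1 * catalan p.2) := by
    refine sum_congr rfl fun p _ => ?_
    rw [← succ_mul_catalan_eq_centralBinom]; ring
  have hS_swap : S = ∑ p ∈ antidiagonal n, (p.1 + 1) * (catalan p.1 * catalan p.2) := by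
    rw [hS, ← Nat.sum_antidiagonal_swap]
    exact sum_congr rfl fun p _ => by simp only [Prod.fst_swap, Prod.snd_swap]; ring
  have h_double : S + S = (n + 2) * catalan (n + 1) := by
    nth_rewrite 2 [hS_swap]
    rw [hS, ← sum_add_distrib, catalan_succ', mul_sum]
    refine sum_congr rfl fun p hp => ?_
    rw [← HasAntidiagonal.mem_antidiagonal.mp hp]; ring
  rw [succ_succ_mul_catalan_succ] at h_double
  linarith

theorem Cgf_mul_Bgf_add_Cgf : Cgf * Bgf + Cgf = 2 * Bgf := by
  ext n
  rw [← map_ofNat C 2, coeff_C_mul, map_add, coeff_mul]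
  simp only [Bgf, Cgf, coeff_mk, ← Nat.centralBinom_eq_two_mul_choose]
  have h := sum_antidiagonal_catalan_mul_centralBinom n
  have hC := succ_mul_catalan_eq_centralBinom n
  qify at h hC
  rw [h, ← hC]
  ring

/-- For `n ≥ 1`, the number of new type vertices over all right path* trees with `n`
edges is `[zⁿ](BC − B/C) = ((3n+1)/(2n+2))·binom(2n,n)`. -/
theorem stmt17 (n : ℕ) (hn : 1 ≤ n) :
    PowerSeries.coeff n (Bgf * Cgf - Bgf * Cgf⁻¹) =
      (3 * (n : ℚ) + 1) / (2 * (n : ℚ) + 2) * ((2 * n).choose n : ℚ) := by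
  have hC : Cgf * Cgf⁻¹ = 1 := PowerSeries.mul_inv_cancel _ (by simp [Cgf])
  have h_series : 2 * (Bgf * Cgf - Bgf * Cgf⁻¹) = 3 * Bgf - 1 - 2 * Cgf := by
    linear_combination (2 + Cgf⁻¹) * Cgf_mul_Bgf_add_Cgf - (Bgf + 1) * hC
  have h_coeff := congrArg (coeff n) h_series
  have h_choose : ((2 * n).choose n : ℚ) = (n + 1) * catalan n := by
    exact_mod_cast (succ_mul_catalan_eq_centralBinom n).symm
  have hB : coeff n Bgf = (n + 1) * catalan n := by rw [Bgf, coeff_mk, h_choose]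
  have hCn : coeff n Cgf = catalan n := coeff_mk _ _
  simp only [map_sub, ← map_ofNat C, coeff_C_mul, coeff_one, if_neg (by omega : n ≠ 0), hB,
    hCn] at h_coeff
  rw [map_sub, h_choose]
  field_simp
  linear_combination h_coeff
end
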